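/- arXiv:1209.2012 — 7 statements merged into one kernel-verified Lean document; each statement's English description precedes it below -/
import Mathlib

section
/- Characterization of the basic triple for atoms: for all sets S, S' of states of Σ and every atom a, the inclusion (⋃{icTr(σ) | σ ∈ S} ∪ Inconsistent) ; a ⊆ ⋃{icTr(σ) | σ ∈ S'} ∪ Inconsistent holds if and only if a(S) ⊆ S'. -/
def lskip {σ : Type*} : Set (List σ) := {[]}

def cat {σ : Type*} (P Q : Set (List σ)) : Set (List σ) :=
  {w | ∃ p ∈ P, ∃ q ∈ Q, w = p ++ q}

def ic {σ : Type*} : List (σ × σ) → Prop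
  | [] => True
  | [_] => True
  | (_, b) :: (c, d) :: t => b = c ∧ ic ((c, d) :: t)

def Inconsistent {σ : Type*} : Set (List (σ × σ)) := {t | ¬ ic t}

def icTr {σ : Type*} (s : σ) : Set (List (σ × σ)) :=
  {t | ic t ∧ ∃ t' s', t = t' ++ [(s', s)]}

def Kahn {σ : Type*} (P : Set (List (σ × σ))) (s s' : σ) : Prop :=
  ∃ t ∈ icTr s, ∃ t' ∈ icTr s', t' ∈ cat {t} P

lemma ic_cons {σ : Type*} (a b : σ × σ) (t : List (σ × σ)) :
    ic (a :: b :: t) ↔ a.2 = b.1 ∧ ic (b :: t) := by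
  cases a; cases b; simp [ic]

lemma ic_of_append {σ : Type*} : ∀ (p q : List (σ × σ)), ic (p ++ q) → ic p
  | [], _, _ => trivial
  | [_], _, _ => trivial
  | a :: b :: t, q, h => by
      rw [List.cons_append, List.cons_append, ic_cons] at h
      rw [ic_cons]
      exact ⟨h.1, ic_of_append (b :: t) q h.2⟩

lemma ic_append_last {σ : Type*} (p : List (σ × σ)) (u s x y : σ) :
    ic (p ++ [(u, s), (x, y)]) ↔ ic (p ++ [(u, s)]) ∧ s = x := by
  induction p with
  | nil => simp [ic]
  | cons a t ih =>
    cases t with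
    | nil => cases a; simp [ic]
    | cons b t' =>
      simp only [List.cons_append] at ih ⊢
      rw [ic_cons, ic_cons, ih]
      tauto

theorem basic_triple_atom_char {σ : Type*} (S S' : Set σ)
    (a : Set (List (σ × σ))) (ha : ∀ t ∈ a, t.length = 1) :
    cat ((⋃ s ∈ S, icTr s) ∪ Inconsistent) a ⊆ (⋃ s ∈ S', icTr s) ∪ Inconsistent ↔
      (⋃ s ∈ S, {s' | [(s, s')] ∈ a}) ⊆ S' := by
  constructor
  · intro h s' hs'
    simp only [Set.mem_iUnion, Set.mem_setOf_eq] at hs'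
    obtain ⟨s, hs, hq⟩ := hs'
    have hw : ([(s, s), (s, s')] : List (σ × σ)) ∈
        cat ((⋃ s ∈ S, icTr s) ∪ Inconsistent) a := by
      refine ⟨[(s, s)], Or.inl ?_, [(s, s')], hq, rfl⟩
      simp only [Set.mem_iUnion]
      exact ⟨s, hs, ⟨trivial, [], s, rfl⟩⟩
    rcases h hw with h' | h'
    · simp only [Set.mem_iUnion] at h'
      obtain ⟨σ', hσ', hic, t', u, heq⟩ := h'
      have := congrArg List.getLast? heq
      simp at this
      obtain ⟨_, rfl⟩ := this
      exact hσ'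
    · exact absurd (by simp [ic]) h'
  · rintro h w ⟨p, hp, q, hq, rfl⟩
    have hl := ha q hq
    match q, hl with
    | [(x, y)], _ =>
    rcases hp with hp | hp
    · simp only [Set.mem_iUnion] at hp
      obtain ⟨s, hs, hic, t', u, rfl⟩ := hp
      by_cases hc : s = x
      · subst hc
        left
        simp only [Set.mem_iUnion]
        refine ⟨y, h ?_, ?_, t' ++ [(u, s)], s, by simp⟩
        · simp only [Set.mem_iUnion, Set.mem_setOf_eq]
          exact ⟨s, hs, hq⟩
        · rw [List.append_assoc]
          exact (ic_append_last t' u s s y).2 ⟨hic, rfl⟩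
      · right
        intro hic'
        rw [List.append_assoc] at hic'
        exact hc ((ic_append_last t' u s x y).1 hic').2
    · right
      exact fun hic' => hp (ic_of_append p [(x, y)] hic')
end

section
/- The Kahn judgement is independent of the history before the initial state: for every description P over Σ and states σ, σ', ⟨P,σ⟩ ⇓ σ' holds if and only if for every t ∈ icTr(σ) there exists t' ∈ icTr(σ') with t' ∈ {t};P. -/
theorem ic_app {σ : Type*} : ∀ (l₁ : List (σ × σ)) (p : σ × σ) (l₂ : List (σ × σ)),
    ic (l₁ ++ p :: l₂) ↔ ic (l₁ ++ [p]) ∧ ic (p :: l₂)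
  | [], p, l₂ => by simp [ic]
  | [(a, b)], (c, d), l₂ => by simp [ic]
  | (a, b) :: (c, d) :: t, p, l₂ => by
      have := ic_app ((c, d) :: t) p l₂
      simp only [List.cons_append, ic] at *
      tauto

theorem kahn_history_independent {σ : Type*} (P : Set (List (σ × σ))) (s s' : σ) :
    Kahn P s s' ↔ ∀ t ∈ icTr s, ∃ t' ∈ icTr s', t' ∈ cat {t} P := by
  constructor
  · rintro ⟨t, ⟨ict, w, c, rfl⟩, t', ⟨ict', w', e, ht'⟩, p, rfl, q, hqP, rfl⟩ u ⟨icu, v, d, rfl⟩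
    match q, hqP with
    | [], hqP =>
      rw [List.append_nil] at ht'
      have : (c, s) = (e, s') := by
        have := congrArg List.getLast? ht'
        simpa using this
      obtain ⟨rfl, rfl⟩ := Prod.mk.injEq .. ▸ this
      exact ⟨v ++ [(d, s)], ⟨icu, v, d, rfl⟩, v ++ [(d, s)], rfl, [], hqP, by simp⟩
    | p :: q', hqP =>
      rw [ic_app] at ict'
      obtain ⟨h1, h2⟩ := ict'
      rw [List.append_assoc, List.singleton_append, ic_app] at h1
      obtain ⟨-, h3⟩ := h1
      have hq : p :: q' = (p :: q').dropLast ++ [(p :: q').getLast (by simp)] :=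
        (List.dropLast_append_getLast _).symm
      have hL : (p :: q').getLast (by simp) = (e, s') := by
        conv_lhs at ht' => rw [hq]
        simp only [← List.append_assoc] at ht'
        have h5 := congrArg List.getLast? ht'
        rw [List.getLast?_concat, List.getLast?_concat] at h5
        exact Option.some_inj.mp h5
      rw [hL] at hq
      have hic : ic ((v ++ [(d, s)]) ++ p :: q') := by
        rw [ic_app, List.append_assoc, List.singleton_append, ic_app]
        exact ⟨⟨icu, h3⟩, h2⟩
      have hend : (v ++ [(d, s)]) ++ p :: q' =
          ((v ++ [(d, s)]) ++ (p :: q').dropLast) ++ [(e, s')] := by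
        conv_lhs => rw [hq]
        simp
      exact ⟨(v ++ [(d, s)]) ++ p :: q',
        ⟨hic, (v ++ [(d, s)]) ++ (p :: q').dropLast, e, hend⟩,
        v ++ [(d, s)], rfl, p :: q', hqP, rfl⟩
  · intro h
    obtain ⟨t', ht', hc⟩ := h [(s, s)] ⟨trivial, [], s, rfl⟩
    exact ⟨[(s, s)], ⟨trivial, [], s, rfl⟩, t', ht', hc⟩
end

section
/- The Kahn sequencing and concurrency rules hold for descriptions: if ⟨P,σ⟩ ⇓ σ' and ⟨P',σ'⟩ ⇓ σ'', then ⟨P;P',σ⟩ ⇓ σ'' and ⟨P ∥ P',σ⟩ ⇓ σ''. -/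
def interleave {σ : Type*} : List σ → List σ → Set (List σ)
  | [], q => {q}
  | p, [] => {p}
  | e :: p, e' :: q =>
      (e :: ·) '' interleave p (e' :: q) ∪ (e' :: ·) '' interleave (e :: p) q
termination_by p q => p.length + q.length

def shuffle {σ : Type*} (P Q : Set (List σ)) : Set (List σ) :=
  ⋃ p ∈ P, ⋃ q ∈ Q, interleave p q

lemma ic_split {σ : Type*} (a : List (σ × σ)) (x s : σ) (b : List (σ × σ)) :
    ic (a ++ (x, s) :: b) ↔ ic (a ++ [(x, s)]) ∧ ic ((x, s) :: b) := by
  induction a with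
  | nil => simp [ic]
  | cons e a ih =>
    obtain ⟨e1, e2⟩ := e
    cases a with
    | nil =>
      cases b with
      | nil => simp [ic]
      | cons f b => obtain ⟨f1, f2⟩ := f; simp [ic]
    | cons g a =>
      obtain ⟨g1, g2⟩ := g
      simp only [List.cons_append, ic] at *
      tauto

lemma ic_cons_indep {σ : Type*} (x y s : σ) (b : List (σ × σ))
    (h : ic ((x, s) :: b)) : ic ((y, s) :: b) := by
  cases b with
  | nil => trivial
  | cons f b => obtain ⟨f1, f2⟩ := f; exact h

lemma self_mem_interleave {σ : Type*} (p q : List σ) : p ++ q ∈ interleave p q := by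
  induction p with
  | nil => simp [interleave]
  | cons e p ih =>
    cases q with
    | nil => simp [interleave]
    | cons f q =>
      rw [interleave]
      left
      exact ⟨p ++ f :: q, ih, rfl⟩

theorem kahn_seq_conc {σ : Type*} (P P' : Set (List (σ × σ))) (s s' s'' : σ)
    (h : Kahn P s s') (h' : Kahn P' s' s'') :
    Kahn (cat P P') s s'' ∧ Kahn (shuffle P P') s s'' := by
  obtain ⟨t, ⟨ict, c, x, hc⟩, t', ⟨ict', d, y, hd⟩, tt, htt, p, hp, hep⟩ := h
  obtain ⟨u, ⟨icu, cu, xu, hcu⟩, u', ⟨icu', du, yu, hdu⟩, uu, huu, p', hp', hep'⟩ := h'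
  simp only [Set.mem_singleton_iff] at htt huu
  subst htt huu
  have hcomb : cu ++ [(xu, s')] ++ p' = du ++ [(yu, s'')] := by
    rw [← hcu, ← hep', hdu]
  have key : t' ++ p' ∈ icTr s'' := by
    rcases p'.eq_nil_or_concat with rfl | ⟨q, z, rfl⟩
    · simp only [List.append_nil] at hcomb ⊢
      have hl := congrArg List.getLast? hcomb
      simp only [List.getLast?_concat] at hl
      have hs : s' = s'' := congrArg Prod.snd (Option.some_injective _ hl)
      exact ⟨ict', d, y, by rw [hd, hs]⟩
    · simp only [List.concat_eq_append] at hp' hep' hcomb ⊢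
      have hl := congrArg List.getLast? hcomb
      simp only [← List.append_assoc, List.getLast?_concat] at hl
      have hz : z = (yu, s'') := Option.some_injective _ hl
      constructor
      · have hicu' : ic (cu ++ (xu, s') :: (q ++ [z])) := by
          rw [hep', hcu] at icu'
          simpa using icu'
        have h1 := ((ic_split cu xu s' (q ++ [z])).mp hicu').2
        have h2 := ic_cons_indep xu y s' _ h1
        have := (ic_split d y s' (q ++ [z])).mpr ⟨by rw [← hd]; exact ict', h2⟩
        rw [hd]
        simpa using this
      · exact ⟨t' ++ q, yu, by rw [← hz, List.append_assoc]⟩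
  refine ⟨⟨tt, ⟨ict, c, x, hc⟩, t' ++ p', key, tt, rfl, p ++ p', ⟨p, hp, p', hp', rfl⟩, by
      rw [hep, List.append_assoc]⟩,
    ⟨tt, ⟨ict, c, x, hc⟩, t' ++ p', key, tt, rfl, p ++ p', ?_, by
      rw [hep, List.append_assoc]⟩⟩
  simp only [shuffle, Set.mem_iUnion]
  exact ⟨p, hp, p', hp', self_mem_interleave p p'⟩
end

section
/- The Plotkin judgement is independent of the history before the initial state: ⟨P,σ⟩ → ⟨P',σ'⟩ holds if and only if for every t ∈ icTr(σ) there exist t' ∈ icTr(σ') and Q ∈ Actions with Q;P' ⊆ P and {t'} ⊆ {t};Q. -/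
def Actions {σ : Type*} (AO : Set (Set (List (σ × σ)))) : Set (Set (List (σ × σ))) :=
  insert lskip AO

def Plotkin {σ : Type*} (AO : Set (Set (List (σ × σ))))
    (P : Set (List (σ × σ))) (s : σ) (P' : Set (List (σ × σ))) (s' : σ) : Prop :=
  ∃ t ∈ icTr s, ∃ t' ∈ icTr s', ∃ Q ∈ Actions AO, cat Q P' ⊆ P ∧ {t'} ⊆ cat {t} Q


lemma ic_iff_chain' {σ : Type*} : ∀ t : List (σ × σ), ic t ↔ List.Chain' (fun p q => p.2 = q.1) t
  | [] => by simp [ic, List.Chain']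
  | [_] => by simp [ic, List.Chain']
  | (a, b) :: (c, d) :: t => by
    rw [ic, List.Chain', List.isChain_cons_cons, ic_iff_chain' ((c, d) :: t)]; exact Iff.rfl

lemma last_eq {σ : Type*} {t₁ t₂ : List (σ × σ)} {p q : σ × σ}
    (h : t₁ ++ [p] = t₂ ++ [q]) : p = q := by
  have := congrArg List.getLast? h
  simpa using this

theorem plotkin_history_independent {σ : Type*}
    (AO : Set (Set (List (σ × σ)))) (hAO : ∀ a ∈ AO, ∀ t ∈ a, t.length = 1)
    (P P' : Set (List (σ × σ))) (s s' : σ) :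
    Plotkin AO P s P' s' ↔
      ∀ t ∈ icTr s, ∃ t' ∈ icTr s', ∃ Q ∈ Actions AO, cat Q P' ⊆ P ∧ {t'} ⊆ cat {t} Q := by
  constructor
  · rintro ⟨t₀, ⟨hic₀, t₁, u, rfl⟩, t₀', ⟨hic₀', t₂, v, ht₀'⟩, Q, hQ, hsub, hmem⟩ t ht
    obtain ⟨hict, t₃, w, rfl⟩ := ht
    have hmem' : t₀' ∈ cat {t₁ ++ [(u, s)]} Q := hmem rfl
    obtain ⟨p, hp, q, hq, hpq⟩ := hmem'
    rw [Set.mem_singleton_iff] at hp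
    subst hp
    rcases hQ with hQ | hQ
    · -- Q = lskip
      have hqnil : q = [] := by
        subst hQ
        simpa [lskip] using hq
      subst hqnil
      rw [List.append_nil] at hpq
      subst hpq
      have hss' : s = s' := by
        have := last_eq (ht₀'.symm)
        exact (Prod.ext_iff.mp this).2.symm
      subst hss'
      refine ⟨t₃ ++ [(w, s)], ⟨hict, t₃, w, rfl⟩, Q, Or.inl hQ, hsub, ?_⟩
      intro x hx
      rw [Set.mem_singleton_iff] at hx
      subst hx
      exact ⟨_, rfl, [], by simp [hQ, lskip], by simp⟩
    · -- Q ∈ AO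
      have hlen := hAO Q hQ q hq
      obtain ⟨⟨a, b⟩, rfl⟩ : ∃ x, q = [x] := by
        match q, hlen with
        | [x], _ => exact ⟨x, rfl⟩
      -- b = s'
      have hb : (a, b) = (v, s') := by
        have : t₁ ++ [(u, s)] ++ [(a, b)] = (t₁ ++ [(u, s)]) ++ [(a, b)] := by simp
        rw [hpq] at ht₀'
        exact last_eq ht₀'
      have hb' : s' = b := ((Prod.ext_iff.mp hb).2).symm
      -- a = s
      have hchain : List.Chain' (fun p q : σ × σ => p.2 = q.1) ((t₁ ++ [(u, s)]) ++ [(a, b)]) := by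
        rw [← ic_iff_chain', ← hpq]; exact hic₀'
      have ha : s = a := by
        rw [List.Chain', List.isChain_append] at hchain
        have := hchain.2.2 (u, s) (by simp) (a, b) (by simp)
        simpa using this
      subst ha; subst hb'
      refine ⟨(t₃ ++ [(w, s)]) ++ [(s, s')], ⟨?_, t₃ ++ [(w, s)], s, rfl⟩, Q, Or.inr hQ, hsub, ?_⟩
      · rw [ic_iff_chain', List.Chain', List.isChain_append]
        refine ⟨(ic_iff_chain' _).mp hict, by simp, ?_⟩
        intro x hx y hy
        simp at hx hy
        subst hx hy
        rfl
      · intro x hx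
        rw [Set.mem_singleton_iff] at hx
        subst hx
        exact ⟨_, rfl, [(s, s')], hq, rfl⟩
  · intro h
    have hs : [(s, s)] ∈ icTr s := ⟨trivial, [], s, rfl⟩
    obtain ⟨t', ht', Q, hQ, hsub, hmem⟩ := h [(s, s)] hs
    exact ⟨[(s, s)], hs, t', ht', Q, hQ, hsub, hmem⟩
end

section
/- The Plotkin concurrency rule holds for descriptions: if ⟨P,σ⟩ → ⟨R,σ'⟩ then ⟨P ∥ P',σ⟩ → ⟨R ∥ P',σ'⟩ and ⟨P' ∥ P,σ⟩ → ⟨P' ∥ R,σ'⟩. -/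
lemma interleave_nil_right {σ : Type*} (p : List σ) : interleave p [] = {p} := by
  cases p <;> simp [interleave]

lemma cons_interleave_left {σ : Type*} (a : σ) {r p' w : List σ}
    (hw : w ∈ interleave r p') : a :: w ∈ interleave (a :: r) p' := by
  cases p' with
  | nil =>
      rw [interleave_nil_right] at hw ⊢
      simp_all
  | cons e q =>
      cases r with
      | nil =>
          simp only [interleave, Set.mem_singleton_iff] at hw
          subst hw
          simp [interleave]
      | cons f p =>
          rw [interleave]
          exact Set.mem_union_left _ ⟨w, hw, rfl⟩

lemma cons_interleave_right {σ : Type*} (a : σ) {r p' w : List σ}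
    (hw : w ∈ interleave p' r) : a :: w ∈ interleave p' (a :: r) := by
  cases p' with
  | nil =>
      simp only [interleave, Set.mem_singleton_iff] at hw ⊢
      simp [hw]
  | cons e q =>
      cases r with
      | nil =>
          rw [interleave_nil_right] at hw
          subst hw
          simp [interleave]
      | cons f p =>
          rw [interleave]
          exact Set.mem_union_right _ ⟨w, hw, rfl⟩

lemma append_interleave_left {σ : Type*} (q : List σ) {r p' w : List σ}
    (hw : w ∈ interleave r p') : q ++ w ∈ interleave (q ++ r) p' := by
  induction q with
  | nil => simpa using hw
  | cons a q ih => exact cons_interleave_left a ih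

lemma append_interleave_right {σ : Type*} (q : List σ) {r p' w : List σ}
    (hw : w ∈ interleave p' r) : q ++ w ∈ interleave p' (q ++ r) := by
  induction q with
  | nil => simpa using hw
  | cons a q ih => exact cons_interleave_right a ih

theorem plotkin_conc {σ : Type*}
    (AO : Set (Set (List (σ × σ)))) (hAO : ∀ a ∈ AO, ∀ t ∈ a, t.length = 1)
    (P P' R : Set (List (σ × σ))) (s s' : σ)
    (h : Plotkin AO P s R s') :
    Plotkin AO (shuffle P P') s (shuffle R P') s' ∧
    Plotkin AO (shuffle P' P) s (shuffle P' R) s' := by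
  obtain ⟨t, ht, t', ht', Q, hQ, hsub, htt'⟩ := h
  constructor
  · refine ⟨t, ht, t', ht', Q, hQ, ?_, htt'⟩
    rintro w ⟨q, hq, x, hx, rfl⟩
    simp only [shuffle, Set.mem_iUnion] at hx ⊢
    obtain ⟨r, hr, p', hp', hxr⟩ := hx
    exact ⟨q ++ r, hsub ⟨q, hq, r, hr, rfl⟩, p', hp', append_interleave_left q hxr⟩
  · refine ⟨t, ht, t', ht', Q, hQ, ?_, htt'⟩
    rintro w ⟨q, hq, x, hx, rfl⟩
    simp only [shuffle, Set.mem_iUnion] at hx ⊢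
    obtain ⟨p', hp', r, hr, hxr⟩ := hx
    exact ⟨p', hp', q ++ r, hsub ⟨q, hq, r, hr, rfl⟩, append_interleave_right q hxr⟩
end

section
/- The trace-set mapping from commands to descriptions is a homomorphism for interleaving: for all commands C and C', T⟨C ∥ C'⟩ = T⟨C⟩ ∥ T⟨C'⟩. -/
def Atom (σ : Type*) : Type _ := {a : Set (List (σ × σ)) // ∀ t ∈ a, t.length = 1}

def traceSetOfList {σ : Type*} : List (Atom σ) → Set (List (σ × σ))
  | [] => lskip
  | a :: as => cat a.1 (traceSetOfList as)

def traceSetOfCmd {σ : Type*} (C : Set (List (Atom σ))) : Set (List (σ × σ)) :=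
  ⋃ as ∈ C, traceSetOfList as

lemma interleave_nil_left {σ : Type*} (q : List σ) : interleave [] q = {q} := by
  cases q <;> simp [interleave]

lemma interleave_cons {σ : Type*} (e e' : σ) (p q : List σ) :
    interleave (e :: p) (e' :: q) =
      (e :: ·) '' interleave p (e' :: q) ∪ (e' :: ·) '' interleave (e :: p) q := by
  simp [interleave]

lemma mem_shuffle {σ : Type*} {P Q : Set (List σ)} {w : List σ} :
    w ∈ shuffle P Q ↔ ∃ p ∈ P, ∃ q ∈ Q, w ∈ interleave p q := by
  simp [shuffle]

lemma mem_cat {σ : Type*} {P Q : Set (List σ)} {w : List σ} :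
    w ∈ cat P Q ↔ ∃ p ∈ P, ∃ q ∈ Q, w = p ++ q := Iff.rfl

lemma mem_traceSetOfCmd {σ : Type*} {C : Set (List (Atom σ))} {w : List (σ × σ)} :
    w ∈ traceSetOfCmd C ↔ ∃ as ∈ C, w ∈ traceSetOfList as := by
  simp [traceSetOfCmd]

lemma atom_mem {σ : Type*} (a : Atom σ) {t : List (σ × σ)} (h : t ∈ a.1) :
    ∃ e, t = [e] := by
  have := a.2 t h
  exact List.length_eq_one_iff.mp this

lemma shuffle_cat_cat {σ : Type*} (a b : Atom σ) (P Q : Set (List (σ × σ))) :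
    shuffle (cat a.1 P) (cat b.1 Q) =
      cat a.1 (shuffle P (cat b.1 Q)) ∪ cat b.1 (shuffle (cat a.1 P) Q) := by
  ext w
  constructor
  · rintro hw
    rw [mem_shuffle] at hw
    obtain ⟨p, hp, q, hq, hw⟩ := hw
    obtain ⟨t, ht, p', hp', rfl⟩ := hp
    obtain ⟨u, hu, q', hq', rfl⟩ := hq
    obtain ⟨e, rfl⟩ := atom_mem a ht
    obtain ⟨e', rfl⟩ := atom_mem b hu
    rw [List.singleton_append, List.singleton_append, interleave_cons] at hw
    rcases hw with ⟨r, hr, rfl⟩ | ⟨r, hr, rfl⟩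
    · left
      exact ⟨[e], ht, r, mem_shuffle.mpr ⟨p', hp', e' :: q', ⟨[e'], hu, q', hq', rfl⟩, hr⟩, rfl⟩
    · right
      exact ⟨[e'], hu, r, mem_shuffle.mpr ⟨e :: p', ⟨[e], ht, p', hp', rfl⟩, q', hq', hr⟩, rfl⟩
  · rintro (⟨t, ht, r, hr, rfl⟩ | ⟨u, hu, r, hr, rfl⟩)
    · obtain ⟨e, rfl⟩ := atom_mem a ht
      rw [mem_shuffle] at hr
      obtain ⟨p, hp, q, hq, hr⟩ := hr
      obtain ⟨u, hu, q', hq', rfl⟩ := hq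
      obtain ⟨e', rfl⟩ := atom_mem b hu
      refine mem_shuffle.mpr ⟨e :: p, ⟨[e], ht, p, hp, rfl⟩, e' :: q', ⟨[e'], hu, q', hq', rfl⟩, ?_⟩
      rw [interleave_cons]
      exact Or.inl ⟨r, hr, rfl⟩
    · obtain ⟨e', rfl⟩ := atom_mem b hu
      rw [mem_shuffle] at hr
      obtain ⟨p, hp, q, hq, hr⟩ := hr
      obtain ⟨t, ht, p', hp', rfl⟩ := hp
      obtain ⟨e, rfl⟩ := atom_mem a ht
      refine mem_shuffle.mpr ⟨e :: p', ⟨[e], ht, p', hp', rfl⟩, e' :: q, ⟨[e'], hu, q, hq, rfl⟩, ?_⟩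
      rw [interleave_cons]
      exact Or.inr ⟨r, hr, rfl⟩

lemma traceSetOfCmd_union {σ : Type*} (S T : Set (List (Atom σ))) :
    traceSetOfCmd (S ∪ T) = traceSetOfCmd S ∪ traceSetOfCmd T := by
  unfold traceSetOfCmd; exact Set.biUnion_union S T _

lemma traceSetOfCmd_image_cons {σ : Type*} (a : Atom σ) (S : Set (List (Atom σ))) :
    traceSetOfCmd ((a :: ·) '' S) = cat a.1 (traceSetOfCmd S) := by
  ext w
  constructor
  · intro hw
    obtain ⟨as, has, hw⟩ := mem_traceSetOfCmd.mp hw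
    obtain ⟨bs, hbs, rfl⟩ := has
    obtain ⟨t, ht, r, hr, rfl⟩ := hw
    exact mem_cat.mpr ⟨t, ht, r, mem_traceSetOfCmd.mpr ⟨bs, hbs, hr⟩, rfl⟩
  · intro hw
    obtain ⟨t, ht, r, hr, rfl⟩ := mem_cat.mp hw
    obtain ⟨bs, hbs, hr⟩ := mem_traceSetOfCmd.mp hr
    exact mem_traceSetOfCmd.mpr ⟨a :: bs, ⟨bs, hbs, rfl⟩, mem_cat.mpr ⟨t, ht, r, hr, rfl⟩⟩

lemma shuffle_lskip_left {σ : Type*} (Q : Set (List σ)) : shuffle lskip Q = Q := by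
  ext w
  simp [mem_shuffle, lskip, interleave_nil_left]

lemma shuffle_lskip_right {σ : Type*} (P : Set (List σ)) : shuffle P lskip = P := by
  ext w
  simp [mem_shuffle, lskip, interleave_nil_right]

lemma key {σ : Type*} : ∀ n (as bs : List (Atom σ)), as.length + bs.length = n →
    traceSetOfCmd (interleave as bs) = shuffle (traceSetOfList as) (traceSetOfList bs) := by
  intro n
  induction n using Nat.strong_induction_on with
  | _ n ih =>
    rintro as bs rfl
    match as, bs with
    | [], bs =>
      rw [interleave_nil_left]
      simp [traceSetOfCmd, traceSetOfList, shuffle_lskip_left]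
    | a :: as, [] =>
      rw [interleave_nil_right]
      simp [traceSetOfCmd, traceSetOfList, shuffle_lskip_right]
    | a :: as, b :: bs =>
      rw [interleave_cons, traceSetOfCmd_union, traceSetOfCmd_image_cons,
        traceSetOfCmd_image_cons,
        ih (as.length + (b :: bs).length) (by simp only [List.length_cons]; omega) as (b :: bs) rfl,
        ih ((a :: as).length + bs.length) (by simp only [List.length_cons]; omega) (a :: as) bs rfl]
      show cat a.1 (shuffle (traceSetOfList as) (traceSetOfList (b :: bs))) ∪
        cat b.1 (shuffle (traceSetOfList (a :: as)) (traceSetOfList bs)) = _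
      rw [show traceSetOfList (b :: bs) = cat b.1 (traceSetOfList bs) from rfl,
        show traceSetOfList (a :: as) = cat a.1 (traceSetOfList as) from rfl,
        shuffle_cat_cat]

theorem traceSet_shuffle_hom {σ : Type*} (C C' : Set (List (Atom σ))) :
    traceSetOfCmd (shuffle C C') = shuffle (traceSetOfCmd C) (traceSetOfCmd C') := by
  ext w
  constructor
  · intro hw
    obtain ⟨as, has, hw⟩ := mem_traceSetOfCmd.mp hw
    obtain ⟨p, hp, q, hq, hpq⟩ := mem_shuffle.mp has
    have h1 : w ∈ traceSetOfCmd (interleave p q) := mem_traceSetOfCmd.mpr ⟨as, hpq, hw⟩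
    rw [key (p.length + q.length) p q rfl] at h1
    obtain ⟨t, ht, u, hu, h1⟩ := mem_shuffle.mp h1
    exact mem_shuffle.mpr ⟨t, mem_traceSetOfCmd.mpr ⟨p, hp, ht⟩, u,
      mem_traceSetOfCmd.mpr ⟨q, hq, hu⟩, h1⟩
  · intro hw
    obtain ⟨t, ht, u, hu, hw⟩ := mem_shuffle.mp hw
    obtain ⟨p, hp, ht⟩ := mem_traceSetOfCmd.mp ht
    obtain ⟨q, hq, hu⟩ := mem_traceSetOfCmd.mp hu
    have h1 : w ∈ traceSetOfCmd (interleave p q) := by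
      rw [key (p.length + q.length) p q rfl]
      exact mem_shuffle.mpr ⟨t, ht, u, hu, hw⟩
    obtain ⟨as, has, hw'⟩ := mem_traceSetOfCmd.mp h1
    exact mem_traceSetOfCmd.mpr ⟨as, mem_shuffle.mpr ⟨p, hp, q, hq, has⟩, hw'⟩
end

section
/- The basic views calculus is consistent with the Kahn calculus: for all sets S, S' of states of Σ and every description P, if (⋃{icTr(σ) | σ ∈ S} ∪ Inconsistent) ; P ⊆ ⋃{icTr(σ) | σ ∈ S'} ∪ Inconsistent, then for all states σ ∈ S and all states σ', ⟨P,σ⟩ ⇓ σ' implies σ' ∈ S'. -/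
theorem basic_views_kahn_consistent {σ : Type*} (S S' : Set σ)
    (P : Set (List (σ × σ)))
    (h : cat ((⋃ s ∈ S, icTr s) ∪ Inconsistent) P ⊆ (⋃ s ∈ S', icTr s) ∪ Inconsistent) :
    ∀ s ∈ S, ∀ s', Kahn P s s' → s' ∈ S' := by
  rintro s hs s' ⟨u, ht, t', ht', ⟨u, rfl, p, hp, rfl⟩⟩
  have hmem : u ++ p ∈ cat ((⋃ s ∈ S, icTr s) ∪ Inconsistent) P := by
    exact ⟨u, Or.inl (Set.mem_biUnion hs ht), p, hp, rfl⟩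
  rcases h hmem with hin | hbad
  · obtain ⟨s'', hs'', hmem'⟩ := Set.mem_iUnion₂.mp hin
    obtain ⟨_, a, b, he1⟩ := ht'
    obtain ⟨_, c, d, he2⟩ := hmem'
    have : some (b, s') = some (d, s'') := by
      rw [← List.getLast?_concat (l := a), ← he1, he2, List.getLast?_concat]
    obtain rfl : s' = s'' := ((Prod.mk.injEq ..).mp (Option.some_injective _ this)).2

    exact hs''
  · exact absurd ht'.1 hbad
end
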